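/- For n ≥ 2, the set {φ_id} ∪ {ξ_α : α an idempotent of B_n}, consisting of the identity automorphism together with all idempotent-valued constant maps, is an independent subset of End(B_n) of size n + 2; consequently the upper rank satisfies r_4(End(B_n)) ≥ n + 2. -/

import Mathlib

/-- The underlying set of the Brandt semigroup `B_n`: pairs `(i,j)` with
`i, j ∈ [n]` together with the zero element `θ` (represented by `none`). -/
abbrev Brandt (n : ℕ) := Option (Fin n × Fin n)

/-- The Brandt semigroup operation: `(i,j) + (k,l) = (i,l)` if `j = k`, and `θ`
otherwise; `θ` is a two-sided zero. -/
def bmul {n : ℕ} : Brandt n → Brandt n → Brandt n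
  | some (i, j), some (k, l) => if j = k then some (i, l) else none
  | _, _ => none

instance {n : ℕ} : Mul (Brandt n) := ⟨bmul⟩

@[simp] lemma brandt_mul_def {n : ℕ} (x y : Brandt n) : x * y = bmul x y := rfl

/-- A map `B_n → B_n` is a (semigroup) endomorphism if it preserves the operation. -/
def IsEndo {n : ℕ} (f : Brandt n → Brandt n) : Prop :=
  ∀ x y : Brandt n, f (x * y) = f x * f y

/-- `End(B_n)`: the semigroup (indeed monoid) of endomorphisms of `B_n`.
Multiplication `f * g` is "first `f`, then `g`", the composition convention of
the paper. -/
def BrandtEnd (n : ℕ) := {f : Brandt n → Brandt n // IsEndo f}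

instance {n : ℕ} : Monoid (BrandtEnd n) where
  mul f g := ⟨g.1 ∘ f.1, fun x y =>
    (congrArg g.1 (f.2 x y)).trans (g.2 _ _)⟩
  one := ⟨id, fun _ _ => rfl⟩
  mul_assoc f g h := rfl
  one_mul f := rfl
  mul_one f := rfl

/-- The zero constant endomorphism `ξ_θ`, sending every element of `B_n` to `θ`. -/
def xiTheta (n : ℕ) : BrandtEnd n := ⟨fun _ => (none : Brandt n), fun _ _ => rfl⟩

/-- The nonzero idempotent-valued constant endomorphism `ξ_{(i,i)}`. -/
def xiDiag {n : ℕ} (i : Fin n) : BrandtEnd n :=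
  ⟨fun _ => (some (i, i) : Brandt n), fun _ _ => by simp [bmul]⟩

/-- A subset `U` of a semigroup is independent if no element of `U` lies in the
subsemigroup generated by the remaining elements of `U`. -/
def Independent {M : Type*} [Mul M] (U : Set M) : Prop :=
  ∀ a ∈ U, a ∉ Subsemigroup.closure (U \ {a})

section Aux
variable {n : ℕ}

lemma brandtEnd_mul_apply (f g : BrandtEnd n) (x : Brandt n) :
    (f * g).1 x = g.1 (f.1 x) := rfl

lemma brandtEnd_one_apply (x : Brandt n) : (1 : BrandtEnd n).1 x = x := rfl

lemma one_not_const (hn : 1 ≤ n) (α : Brandt n) :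
    ¬ (∀ x, (1 : BrandtEnd n).1 x = α) := by
  intro h
  have h1 := h none
  have h2 := h (some (⟨0, hn⟩, ⟨0, hn⟩))
  rw [brandtEnd_one_apply] at h1 h2
  rw [← h1] at h2
  exact Option.some_ne_none _ h2

lemma xiDiag_injective : Function.Injective (xiDiag (n := n)) := by
  intro i j h
  have := congrArg (fun f : BrandtEnd n => f.1 none) h
  simp only [xiDiag, Option.some.injEq, Prod.mk.injEq] at this
  exact this.1

lemma xiTheta_ne_xiDiag (i : Fin n) : xiTheta n ≠ xiDiag i := by
  intro h
  have := congrArg (fun f : BrandtEnd n => f.1 none) h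
  simp only [xiTheta, xiDiag] at this
  exact Option.some_ne_none _ this.symm

lemma one_ne_xiTheta (hn : 1 ≤ n) : (1 : BrandtEnd n) ≠ xiTheta n := by
  intro h
  exact one_not_const hn none (fun x => by rw [h]; rfl)

lemma one_ne_xiDiag (hn : 1 ≤ n) (i : Fin n) : (1 : BrandtEnd n) ≠ xiDiag i := by
  intro h
  exact one_not_const hn (some (i, i)) (fun x => by rw [h]; rfl)

/-- The subsemigroup of constant endomorphisms. -/
def constSub (n : ℕ) : Subsemigroup (BrandtEnd n) where
  carrier := {f | ∃ α, ∀ x, f.1 x = α}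
  mul_mem' := by
    rintro f g ⟨α, hα⟩ ⟨β, hβ⟩
    exact ⟨β, fun x => by rw [brandtEnd_mul_apply]; exact hβ _⟩

/-- The subsemigroup of maps that are the identity or a nonzero diagonal constant. -/
def nzSub (n : ℕ) : Subsemigroup (BrandtEnd n) where
  carrier := {f | f = 1 ∨ ∃ j : Fin n, ∀ x, f.1 x = some (j, j)}
  mul_mem' := by
    rintro f g hf (rfl | ⟨j, hj⟩)
    · rw [mul_one]; exact hf
    · right
      exact ⟨j, fun x => by rw [brandtEnd_mul_apply]; exact hj _⟩

/-- The subsemigroup of maps that are the identity or constant with value `≠ some (i,i)`. -/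
def avoidSub (i : Fin n) : Subsemigroup (BrandtEnd n) where
  carrier := {f | f = 1 ∨ ∃ α, α ≠ (some (i, i) : Brandt n) ∧ ∀ x, f.1 x = α}
  mul_mem' := by
    rintro f g hf (rfl | ⟨α, hne, hα⟩)
    · rw [mul_one]; exact hf
    · right
      exact ⟨α, hne, fun x => by rw [brandtEnd_mul_apply]; exact hα _⟩

end Aux

/-- For `n ≥ 2`, the set `{φ_id} ∪ {ξ_α : α idempotent}` (the identity
endomorphism together with all idempotent-valued constant maps) is an
independent subset of `End(B_n)` of size `n + 2`; consequently the upper rank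
`r₄(End(B_n))` (the maximum cardinality of an independent subset) is at least
`n + 2`. -/

theorem upper_rank_endBn_lower_bound (n : ℕ) (hn : 2 ≤ n)
    (U : Set (BrandtEnd n))
    (hUdef : U = insert (1 : BrandtEnd n) ({xiTheta n} ∪ Set.range (xiDiag (n := n)))) :
    Independent U ∧ U.ncard = n + 2 ∧
    ∀ m : ℕ, IsGreatest {k : ℕ | ∃ V : Set (BrandtEnd n),
      Independent V ∧ V.ncard = k} m → n + 2 ≤ m := by
  have hn1 : 1 ≤ n := le_trans one_le_two hn
  -- Independence
  have hInd : Independent U := by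
    intro a haU hcl
    rw [hUdef] at haU
    rcases haU with rfl | hθ | ⟨i, rfl⟩
    · -- a = 1 : everything else is constant
      have hsub : Subsemigroup.closure (U \ {(1 : BrandtEnd n)}) ≤ constSub n := by
        apply Subsemigroup.closure_le.2
        rintro f ⟨hfU, hfne⟩
        rw [hUdef] at hfU
        rcases hfU with rfl | hθ | ⟨i, rfl⟩
        · exact absurd rfl hfne
        · rw [Set.mem_singleton_iff] at hθ; subst hθ
          exact ⟨none, fun _ => rfl⟩
        · exact ⟨some (i, i), fun _ => rfl⟩
      obtain ⟨α, hα⟩ := hsub hcl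
      exact one_not_const hn1 α hα
    · -- a = ξθ
      rw [Set.mem_singleton_iff] at hθ; subst hθ
      have hsub : Subsemigroup.closure (U \ {xiTheta n}) ≤ nzSub n := by
        apply Subsemigroup.closure_le.2
        rintro f ⟨hfU, hfne⟩
        rw [hUdef] at hfU
        rcases hfU with rfl | hθ | ⟨i, rfl⟩
        · exact Or.inl rfl
        · exact absurd hθ hfne
        · exact Or.inr ⟨i, fun _ => rfl⟩
      rcases hsub hcl with h1 | ⟨j, hj⟩
      · exact one_ne_xiTheta hn1 h1.symm
      · exact Option.some_ne_none _ (hj none).symm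
    · -- a = ξDiag i
      have hsub : Subsemigroup.closure (U \ {xiDiag i}) ≤ avoidSub i := by
        apply Subsemigroup.closure_le.2
        rintro f ⟨hfU, hfne⟩
        rw [hUdef] at hfU
        rcases hfU with rfl | hθ | ⟨j, rfl⟩
        · exact Or.inl rfl
        · rw [Set.mem_singleton_iff] at hθ; subst hθ
          exact Or.inr ⟨none, fun h => Option.some_ne_none _ h.symm, fun _ => rfl⟩
        · refine Or.inr ⟨some (j, j), ?_, fun _ => rfl⟩
          intro h
          apply hfne
          rw [Set.mem_singleton_iff]
          rw [Option.some.injEq, Prod.mk.injEq] at h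
          rw [h.1]
      rcases hsub hcl with h1 | ⟨α, hne, hα⟩
      · exact one_ne_xiDiag hn1 i h1.symm
      · exact hne (hα none).symm
  -- Cardinality
  have hfinR : (Set.range (xiDiag (n := n))).Finite := Set.finite_range _
  have hθnR : xiTheta n ∉ Set.range (xiDiag (n := n)) := by
    rintro ⟨i, hi⟩
    exact xiTheta_ne_xiDiag i hi.symm
  have h1n : (1 : BrandtEnd n) ∉ ({xiTheta n} ∪ Set.range (xiDiag (n := n))) := by
    rintro (h | ⟨i, hi⟩)
    · exact one_ne_xiTheta hn1 h
    · exact one_ne_xiDiag hn1 i hi.symm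
  have hcardR : (Set.range (xiDiag (n := n))).ncard = n := by
    rw [← Set.image_univ, Set.ncard_image_of_injective _ xiDiag_injective,
      Set.ncard_univ, Nat.card_eq_fintype_card, Fintype.card_fin]
  have hcard : U.ncard = n + 2 := by
    rw [hUdef, Set.singleton_union,
      Set.ncard_insert_of_notMem (by simpa [Set.singleton_union] using h1n) (hfinR.insert _),
      Set.ncard_insert_of_notMem hθnR hfinR, hcardR]
  refine ⟨hInd, hcard, fun m hm => hm.2 ⟨U, hInd, hcard⟩⟩
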